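/- For every square (x,y) of the 8×8 chessboard with 3 ≤ x ≤ 7 and 1 ≤ y ≤ 3 (the box c1–g3), there is a knight path of length at most 4, with all squares on the board, from b8 = (2,8) to (x,y) or from g8 = (7,8) to (x,y). (This is the key coverage claim in the proof that Multimove Chess (i,j) with i ≤ 3 and j ≥ 4 is a win for Black: in at most four moves a Black knight starting from its home square can reach any square of the box c1–g3.) -/

import Mathlib

/-- A square is on the 8×8 board if both coordinates are between 1 and 8. -/
def OnBoard (p : ℤ × ℤ) : Prop :=
  1 ≤ p.1 ∧ p.1 ≤ 8 ∧ 1 ≤ p.2 ∧ p.2 ≤ 8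

/-- A knight move: the multiset of coordinate distances is {1, 2}. -/
def KnightMove (p q : ℤ × ℤ) : Prop :=
  ({|p.1 - q.1|, |p.2 - q.2|} : Set ℤ) = ({1, 2} : Set ℤ)

/-- A knight path of length `n` from `p` to `q`: a sequence of squares on the
board starting at `p`, ending at `q`, with consecutive squares a knight move apart. -/
def KnightPath (n : ℕ) (p q : ℤ × ℤ) : Prop :=
  ∃ s : ℕ → ℤ × ℤ, s 0 = p ∧ s n = q ∧
    (∀ i ≤ n, OnBoard (s i)) ∧
    (∀ i < n, KnightMove (s i) (s (i + 1)))

/-!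
Every square of the box lies at most four moves along a route from b8 starting b8–c6, or along
a route from g8 starting g8–f6–e4 or g8–h6.
-/

theorem knightMove_iff {p q : ℤ × ℤ} :
    KnightMove p q ↔
      (|p.1 - q.1| = 1 ∧ |p.2 - q.2| = 2) ∨ (|p.1 - q.1| = 2 ∧ |p.2 - q.2| = 1) :=
  Set.pair_eq_pair_iff

instance : DecidablePred OnBoard := fun _ => inferInstanceAs (Decidable (_ ∧ _))

instance : DecidableRel KnightMove := fun _ _ => decidable_of_iff _ knightMove_iff.symm

theorem KnightPath.zero {p : ℤ × ℤ} (hp : OnBoard p) : KnightPath 0 p p :=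
  ⟨fun _ => p, rfl, rfl, fun _ _ => hp, fun _ h => absurd h (Nat.not_lt_zero _)⟩

theorem KnightPath.cons {n : ℕ} {p q r : ℤ × ℤ} (hp : OnBoard p) (hpq : KnightMove p q)
    (h : KnightPath n q r) : KnightPath (n + 1) p r := by
  obtain ⟨s, rfl, hsn, hboard, hmove⟩ := h
  refine ⟨fun | 0 => p | i + 1 => s i, rfl, hsn, ?_, ?_⟩
  · rintro (_ | i) hi
    exacts [hp, hboard i (by omega)]
  · rintro (_ | i) hi
    exacts [hpq, hmove i (by omega)]

theorem KnightPath.of_route {p : ℤ × ℤ} (l : List (ℤ × ℤ))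
    (hboard : ∀ s ∈ p :: l, OnBoard s := by decide)
    (hchain : (p :: l).IsChain KnightMove := by decide) :
    KnightPath l.length p ((p :: l).getLast (List.cons_ne_nil p l)) := by
  induction l generalizing p with
  | nil => exact .zero (hboard p List.mem_cons_self)
  | cons q l ih =>
    rw [List.isChain_cons_cons] at hchain
    exact .cons (hboard p List.mem_cons_self) hchain.1
      (ih (fun s hs => hboard s (List.mem_cons_of_mem p hs)) hchain.2)

/-- Every square of the box c1–g3 is reachable in at most 4 knight moves
from b8 = (2,8) or from g8 = (7,8). -/
theorem knights_b8_g8_cover_box :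
    ∀ x y : ℤ, 3 ≤ x → x ≤ 7 → 1 ≤ y → y ≤ 3 →
      ∃ n ≤ 4, KnightPath n (2, 8) (x, y) ∨ KnightPath n (7, 8) (x, y) := by
  intro x y hx₁ hx₂ hy₁ hy₂
  interval_cases x <;> interval_cases y
  · exact ⟨_, by decide, .inl (.of_route [(3, 6), (4, 4), (5, 2), (3, 1)])⟩
  · exact ⟨_, by decide, .inl (.of_route [(3, 6), (4, 4), (3, 2)])⟩
  · exact ⟨_, by decide, .inr (.of_route [(6, 6), (5, 4), (3, 3)])⟩
  · exact ⟨_, by decide, .inr (.of_route [(8, 6), (7, 4), (6, 2), (4, 1)])⟩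
  · exact ⟨_, by decide, .inr (.of_route [(6, 6), (5, 4), (4, 2)])⟩
  · exact ⟨_, by decide, .inl (.of_route [(3, 6), (5, 5), (4, 3)])⟩
  · exact ⟨_, by decide, .inl (.of_route [(3, 6), (4, 4), (6, 3), (5, 1)])⟩
  · exact ⟨_, by decide, .inl (.of_route [(3, 6), (4, 4), (5, 2)])⟩
  · exact ⟨_, by decide, .inr (.of_route [(8, 6), (7, 4), (5, 3)])⟩
  · exact ⟨_, by decide, .inr (.of_route [(8, 6), (7, 4), (8, 2), (6, 1)])⟩
  · exact ⟨_, by decide, .inr (.of_route [(8, 6), (7, 4), (6, 2)])⟩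
  · exact ⟨_, by decide, .inl (.of_route [(3, 6), (4, 4), (6, 3)])⟩
  · exact ⟨_, by decide, .inl (.of_route [(3, 6), (4, 4), (5, 2), (7, 1)])⟩
  · exact ⟨_, by decide, .inr (.of_route [(8, 6), (7, 4), (5, 3), (7, 2)])⟩
  · exact ⟨_, by decide, .inr (.of_route [(8, 6), (6, 5), (7, 3)])⟩
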